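/- arXiv:1811.02383 — 3 statements merged into one kernel-verified Lean document; each statement's English description precedes it below -/
import Mathlib

section
/- Let $\mathring\sigma$ be the round metric on the unit sphere $S^2$ with covariant derivative $\mathring\nabla$, and let $F_{AB} = (\mathring\nabla_A\mathring\nabla_B - \tfrac{1}{2}\mathring\sigma_{AB}\mathring\Delta)c$ for a smooth function $c$ on $S^2$. Then $\mathring\nabla_A F_{BD} - \mathring\nabla_B F_{AD} = \mathring\nabla^E F_{BE}\,\mathring\sigma_{AD} - \mathring\nabla^E F_{AE}\,\mathring\sigma_{BD}$. -/
open scoped BigOperators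

noncomputable section

/-- The Levi-Civita symbol on three indices. -/
def lev3 (i j k : Fin 3) : ℝ :=
  if (i, j, k) = ((0 : Fin 3), (1 : Fin 3), (2 : Fin 3)) ∨
     (i, j, k) = ((1 : Fin 3), (2 : Fin 3), (0 : Fin 3)) ∨
     (i, j, k) = ((2 : Fin 3), (0 : Fin 3), (1 : Fin 3)) then 1
  else if (i, j, k) = ((0 : Fin 3), (2 : Fin 3), (1 : Fin 3)) ∨
     (i, j, k) = ((2 : Fin 3), (1 : Fin 3), (0 : Fin 3)) ∨
     (i, j, k) = ((1 : Fin 3), (0 : Fin 3), (2 : Fin 3)) then -1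
  else 0

/-- Abstract tensor calculus on the round unit two-sphere `(S², σ̊)`.
`Pt` is the set of points, `g` the round metric `σ̊_{AB}`, `ginv` its inverse `σ̊^{AB}`,
`eps` the area form `ε̊_{AB}`, `d0`, `d1`, `d2`, `d3` the Levi-Civita covariant derivative
`∇̊` acting on functions, covectors, 2-tensors and 3-tensors (the first index of the result
is the derivative index), `integral` is integration against the round area measure, and
`Xc i` are the three restricted Cartesian coordinate functions (first eigenfunctions).
The axioms record the standard facts on the unit round sphere: symmetry of `σ̊`, the
inverse-metric relation, antisymmetry of `ε̊` and the `ε̊ε̊ = σ̊σ̊ - σ̊σ̊` identity,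
linearity and Leibniz rules for `∇̊`, parallelism of `σ̊` and `ε̊`, commutation of `∇̊` with
`σ̊`-contractions, symmetry of Hessians, the Ricci commutation identities with Gauss
curvature `1`, the divergence theorem, linearity of the integral, the characterizing
properties of the coordinate functions, and solvability/kernel facts for `Δ̊ + 2`. -/
structure Sphere2 where
  Pt : Type
  g : Fin 2 → Fin 2 → Pt → ℝ
  ginv : Fin 2 → Fin 2 → Pt → ℝ
  eps : Fin 2 → Fin 2 → Pt → ℝ
  d0 : (Pt → ℝ) → (Fin 2 → Pt → ℝ)
  d1 : (Fin 2 → Pt → ℝ) → (Fin 2 → Fin 2 → Pt → ℝ)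
  d2 : (Fin 2 → Fin 2 → Pt → ℝ) → (Fin 2 → Fin 2 → Fin 2 → Pt → ℝ)
  d3 : (Fin 2 → Fin 2 → Fin 2 → Pt → ℝ) → (Fin 2 → Fin 2 → Fin 2 → Fin 2 → Pt → ℝ)
  integral : (Pt → ℝ) → ℝ
  Xc : Fin 3 → Pt → ℝ
  g_symm : ∀ A B, g A B = g B A
  ginv_symm : ∀ A B, ginv A B = ginv B A
  g_ginv : ∀ A B x, (∑ C : Fin 2, g A C x * ginv C B x) = if A = B then (1 : ℝ) else 0
  eps_antisymm : ∀ A B x, eps A B x = - eps B A x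
  eps_eps : ∀ A B C E x, eps A B x * eps C E x = g A C x * g B E x - g A E x * g B C x
  d0_add : ∀ f h, d0 (fun x => f x + h x) = fun A x => d0 f A x + d0 h A x
  d0_mul : ∀ f h, d0 (fun x => f x * h x) = fun A x => d0 f A x * h x + f x * d0 h A x
  d0_const : ∀ r : ℝ, d0 (fun _ => r) = fun _ _ => 0
  d1_add : ∀ ω η, d1 (fun B x => ω B x + η B x) = fun A B x => d1 ω A B x + d1 η A B x
  d1_fun_smul : ∀ (f : Pt → ℝ) ω,
    d1 (fun B x => f x * ω B x) = fun A B x => d0 f A x * ω B x + f x * d1 ω A B x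
  d2_add : ∀ T S, d2 (fun B C x => T B C x + S B C x)
    = fun A B C x => d2 T A B C x + d2 S A B C x
  d2_fun_smul : ∀ (f : Pt → ℝ) T,
    d2 (fun B C x => f x * T B C x) = fun A B C x => d0 f A x * T B C x + f x * d2 T A B C x
  d2_tensor : ∀ ω η, d2 (fun B C x => ω B x * η C x)
    = fun A B C x => d1 ω A B x * η C x + ω B x * d1 η A C x
  d3_add : ∀ T S, d3 (fun B C E x => T B C E x + S B C E x)
    = fun A B C E x => d3 T A B C E x + d3 S A B C E x
  d3_tensor : ∀ ω T, d3 (fun B C E x => ω B x * T C E x)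
    = fun A B C E x => d1 ω A B x * T C E x + ω B x * d2 T A C E x
  g_parallel : ∀ A B C x, d2 g A B C x = 0
  eps_parallel : ∀ A B C x, d2 eps A B C x = 0
  ginv_contract_d0 : ∀ (T : Fin 2 → Fin 2 → Pt → ℝ) A x,
    d0 (fun y => ∑ B : Fin 2, ∑ C : Fin 2, ginv B C y * T B C y) A x
      = ∑ B : Fin 2, ∑ C : Fin 2, ginv B C x * d2 T A B C x
  ginv_contract_d1 : ∀ (U : Fin 2 → Fin 2 → Fin 2 → Pt → ℝ) A E x,
    d1 (fun C y => ∑ B : Fin 2, ∑ B' : Fin 2, ginv B B' y * U B B' C y) A E x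
      = ∑ B : Fin 2, ∑ B' : Fin 2, ginv B B' x * d3 U A B B' E x
  hess_symm : ∀ f A B x, d1 (d0 f) A B x = d1 (d0 f) B A x
  ricci1 : ∀ ω A B C x,
    d2 (d1 ω) A B C x - d2 (d1 ω) B A C x = g B C x * ω A x - g A C x * ω B x
  ricci2 : ∀ T A B C E x,
    d3 (d2 T) A B C E x - d3 (d2 T) B A C E x
      = g B C x * T A E x - g A C x * T B E x + g B E x * T C A x - g A E x * T C B x
  divergence_thm : ∀ ω : Fin 2 → Pt → ℝ,
    integral (fun x => ∑ A : Fin 2, ∑ B : Fin 2, ginv A B x * d1 ω A B x) = 0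
  integral_add : ∀ f h, integral (fun x => f x + h x) = integral f + integral h
  integral_smul : ∀ (r : ℝ) f, integral (fun x => r * f x) = r * integral f
  Xc_sq : ∀ x, (∑ i : Fin 3, Xc i x * Xc i x) = 1
  Xc_hess : ∀ i A B x, d1 (d0 (Xc i)) A B x = - g A B x * Xc i x
  Xc_grad : ∀ i j x,
    (∑ A : Fin 2, ∑ B : Fin 2, ginv A B x * d0 (Xc i) A x * d0 (Xc j) B x)
      = (if i = j then (1 : ℝ) else 0) - Xc i x * Xc j x
  Xc_eps : ∀ i A x,
    (∑ B : Fin 2, ∑ B' : Fin 2, eps A B x * ginv B B' x * d0 (Xc i) B' x)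
      = ∑ j : Fin 3, ∑ k : Fin 3, lev3 i j k * Xc j x * d0 (Xc k) A x
  lap_two_surj : ∀ h : Pt → ℝ,
    (∀ i : Fin 3, integral (fun x => h x * Xc i x) = 0) →
    ∃ u : Pt → ℝ, ∀ x,
      (∑ A : Fin 2, ∑ B : Fin 2, ginv A B x * d1 (d0 u) A B x) + 2 * u x = h x
  lap_two_ker : ∀ u : Pt → ℝ,
    (∀ x, (∑ A : Fin 2, ∑ B : Fin 2, ginv A B x * d1 (d0 u) A B x) + 2 * u x = 0) →
    ∃ f : Fin 3 → ℝ, ∀ x, u x = ∑ i : Fin 3, f i * Xc i x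

namespace Sphere2

variable (D : Sphere2)

/-- The Hessian `∇̊_A ∇̊_B f` of a function. -/
def hess (f : D.Pt → ℝ) : Fin 2 → Fin 2 → D.Pt → ℝ := D.d1 (D.d0 f)

/-- The Laplace–Beltrami operator `Δ̊ f = σ̊^{AB} ∇̊_A ∇̊_B f`. -/
def lap (f : D.Pt → ℝ) : D.Pt → ℝ :=
  fun x => ∑ A : Fin 2, ∑ B : Fin 2, D.ginv A B x * D.hess f A B x

/-- The trace-free Hessian `F_{AB} = (∇̊_A ∇̊_B - (1/2) σ̊_{AB} Δ̊) c`. -/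
def Ften (c : D.Pt → ℝ) : Fin 2 → Fin 2 → D.Pt → ℝ :=
  fun A B x => D.hess c A B x - (1 / 2) * D.g A B x * D.lap c x

/-- The rotated (symmetrized) Hessian
`F̲_{AB} = (1/2)(ε̊_{AD} ∇̊^D ∇̊_B + ε̊_{BD} ∇̊^D ∇̊_A) c̲`. -/
def Fbar (c : D.Pt → ℝ) : Fin 2 → Fin 2 → D.Pt → ℝ :=
  fun A B x => (1 / 2) *
    ((∑ E : Fin 2, ∑ E' : Fin 2, D.eps A E x * D.ginv E E' x * D.hess c E' B x)
      + (∑ E : Fin 2, ∑ E' : Fin 2, D.eps B E x * D.ginv E E' x * D.hess c E' A x))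

/-- The shear-type tensor `C_{AB} = F_{AB} + F̲_{AB}` with potentials `c, c̲`. -/
def Cten (c cb : D.Pt → ℝ) : Fin 2 → Fin 2 → D.Pt → ℝ :=
  fun A B x => D.Ften c A B x + D.Fbar cb A B x

/-- The covariant divergence `∇̊_A V^A = σ̊^{AA'} ∇̊_{A'} V_A` of a (lowered) vector field. -/
def divV (V : Fin 2 → D.Pt → ℝ) : D.Pt → ℝ :=
  fun x => ∑ A : Fin 2, ∑ A' : Fin 2, D.ginv A A' x * D.d1 V A' A x

end Sphere2

/-!
Since `σ̊` is parallel, `∇̊_A F_{BD} - ∇̊_B F_{AD}` is the commutator `[∇̊_A, ∇̊_B] ∇̊_D c`, which by the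
Ricci identity with Gauss curvature `1` equals `σ̊_{BD} ∇̊_A c - σ̊_{AD} ∇̊_B c`, minus
`½ (σ̊_{BD} ∇̊_A Δ̊c - σ̊_{AD} ∇̊_B Δ̊c)`. Tracing the same Ricci identity gives the divergence
`∇̊^E F_{BE} = ½ ∇̊_B Δ̊c - ∇̊_B c`, and the two sides agree.
-/

namespace Sphere2

variable (D : Sphere2)

theorem d0_const_mul (r : ℝ) (f : D.Pt → ℝ) :
    D.d0 (fun x => r * f x) = fun A x => r * D.d0 f A x := by
  rw [D.d0_mul, D.d0_const]
  simp only [zero_mul, zero_add]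

theorem sum_ginv_mul_mul_g (ω : Fin 2 → D.Pt → ℝ) (B : Fin 2) (x : D.Pt) :
    ∑ E : Fin 2, ∑ E' : Fin 2, D.ginv E E' x * (ω E' x * D.g B E x) = ω B x := by
  calc ∑ E : Fin 2, ∑ E' : Fin 2, D.ginv E E' x * (ω E' x * D.g B E x)
      = ∑ E' : Fin 2, (∑ E : Fin 2, D.g B E x * D.ginv E E' x) * ω E' x := by
        rw [Finset.sum_comm]
        simp only [Finset.sum_mul]
        refine Finset.sum_congr rfl fun _ _ => Finset.sum_congr rfl fun _ _ => by ring
    _ = ω B x := by simp [D.g_ginv]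

theorem sum_ginv_mul_g_mul (a : ℝ) (x : D.Pt) :
    ∑ E : Fin 2, ∑ E' : Fin 2, D.ginv E E' x * (D.g E' E x * a) = 2 * a := by
  simp only [← mul_assoc, ← Finset.sum_mul]
  rw [Finset.sum_comm]
  simp [mul_comm (D.ginv _ _ x), D.g_ginv]

theorem sum_ginv_mul_swap (T : Fin 2 → Fin 2 → ℝ) (x : D.Pt) :
    ∑ E : Fin 2, ∑ E' : Fin 2, D.ginv E E' x * T E' E
      = ∑ E : Fin 2, ∑ E' : Fin 2, D.ginv E E' x * T E E' := by
  rw [Finset.sum_comm]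
  refine Finset.sum_congr rfl fun E _ => Finset.sum_congr rfl fun E' _ => ?_
  rw [D.ginv_symm]

theorem d0_lap (c : D.Pt → ℝ) (B : Fin 2) (x : D.Pt) :
    D.d0 (D.lap c) B x = ∑ E : Fin 2, ∑ E' : Fin 2, D.ginv E E' x * D.d2 (D.hess c) B E' E x :=
  (D.ginv_contract_d0 (D.hess c) B x).trans
    (D.sum_ginv_mul_swap (fun E E' => D.d2 (D.hess c) B E E' x) x).symm

/-- The traced Ricci identity: on the unit sphere the curvature term contributes `-ω_B`. -/
theorem sum_ginv_d2_d1 (ω : Fin 2 → D.Pt → ℝ) (B : Fin 2) (x : D.Pt) :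
    ∑ E : Fin 2, ∑ E' : Fin 2, D.ginv E E' x * D.d2 (D.d1 ω) E' B E x
      = ∑ E : Fin 2, ∑ E' : Fin 2, D.ginv E E' x * D.d2 (D.d1 ω) B E' E x - ω B x := by
  have ricci : ∀ E E', D.d2 (D.d1 ω) E' B E x
      = D.d2 (D.d1 ω) B E' E x + ω E' x * D.g B E x - D.g E' E x * ω B x := fun E E' => by
    linear_combination D.ricci1 ω E' B E x
  simp only [ricci, mul_add, mul_sub, Finset.sum_add_distrib, Finset.sum_sub_distrib]
  rw [D.sum_ginv_mul_mul_g, D.sum_ginv_mul_g_mul]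
  ring

theorem d2_Ften (c : D.Pt → ℝ) (A B C : Fin 2) (x : D.Pt) :
    D.d2 (D.Ften c) A B C x
      = D.d2 (D.hess c) A B C x - (1 / 2) * D.d0 (D.lap c) A x * D.g B C x := by
  have hF : D.Ften c = fun B C y => D.hess c B C y + (-(1 / 2) * D.lap c y) * D.g B C y := by
    funext B C y
    simp only [Ften]
    ring
  rw [hF, D.d2_add, D.d2_fun_smul, D.d0_const_mul]
  beta_reduce
  rw [D.g_parallel]
  ring

theorem div_Ften (c : D.Pt → ℝ) (B : Fin 2) (x : D.Pt) :
    ∑ E : Fin 2, ∑ E' : Fin 2, D.ginv E E' x * D.d2 (D.Ften c) E' B E x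
      = (1 / 2) * D.d0 (D.lap c) B x - D.d0 c B x := by
  simp only [d2_Ften, mul_sub, Finset.sum_sub_distrib]
  rw [hess, D.sum_ginv_d2_d1, ← hess, ← D.d0_lap]
  have contract : ∑ E : Fin 2, ∑ E' : Fin 2,
      D.ginv E E' x * (1 / 2 * D.d0 (D.lap c) E' x * D.g B E x) = 1 / 2 * D.d0 (D.lap c) B x := by
    rw [← D.sum_ginv_mul_mul_g (D.d0 (D.lap c)) B x]
    simp only [Finset.mul_sum]
    refine Finset.sum_congr rfl fun _ _ => Finset.sum_congr rfl fun _ _ => by ring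
  rw [contract]
  ring

end Sphere2

/-- Commutation identity for the trace-free Hessian `F_{AB}` on the round unit sphere:
`∇̊_A F_{BD} - ∇̊_B F_{AD} = ∇̊^E F_{BE} σ̊_{AD} - ∇̊^E F_{AE} σ̊_{BD}`. -/
theorem stmt_0 (D : Sphere2) (c : D.Pt → ℝ) (A B C : Fin 2) (x : D.Pt) :
    D.d2 (D.Ften c) A B C x - D.d2 (D.Ften c) B A C x
      = (∑ E : Fin 2, ∑ E' : Fin 2, D.ginv E E' x * D.d2 (D.Ften c) E' B E x) * D.g A C x
        - (∑ E : Fin 2, ∑ E' : Fin 2, D.ginv E E' x * D.d2 (D.Ften c) E' A E x) * D.g B C x := by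
  rw [D.div_Ften, D.div_Ften, D.d2_Ften, D.d2_Ften, Sphere2.hess]
  linear_combination D.ricci1 (D.d0 c) A B C x
end
end

section
/- For a symmetric trace-free 2-tensor $C_{AB} = F_{AB} + \underline{F}_{AB}$ on the round unit sphere, given by potentials $c$ and $\underline{c}$ as trace-free Hessian and rotated Hessian respectively, the pointwise identity $\mathring\nabla_A C_{BD}\,\mathring\nabla^A C^{BD} = \mathring\nabla_A C_{BD}\,\mathring\nabla^B C^{AD} + \mathring\nabla^B C_{AB}\,\mathring\nabla_D C^{AD}$ holds. -/
open scoped BigOperators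

noncomputable section

/-! At each point the identity is a polynomial identity among the components of the 3-tensor
`∇̊C` and of `σ̊⁻¹`: in two dimensions it holds for every 3-tensor whose trace over its last two
indices vanishes, and `∇̊C` has this property because `C` is trace-free and `∇̊` commutes with
`σ̊`-contractions. -/

theorem contract_sq_eq_contract_swap_add_div_sq (G : Fin 2 → Fin 2 → ℝ)
    (T : Fin 2 → Fin 2 → Fin 2 → ℝ) (hG : ∀ i j, G i j = G j i)
    (hT : ∀ A, ∑ B : Fin 2, ∑ C : Fin 2, G B C * T A B C = 0) :
    (∑ A : Fin 2, ∑ A' : Fin 2, ∑ B : Fin 2, ∑ B' : Fin 2, ∑ Dd : Fin 2, ∑ D' : Fin 2,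
        G A A' * G B B' * G Dd D' * T A B Dd * T A' B' D')
    = (∑ A : Fin 2, ∑ A' : Fin 2, ∑ B : Fin 2, ∑ B' : Fin 2, ∑ Dd : Fin 2, ∑ D' : Fin 2,
        G A A' * G B B' * G Dd D' * T A B Dd * T B' A' D')
      + (∑ A : Fin 2, ∑ A' : Fin 2, ∑ B : Fin 2, ∑ B' : Fin 2, ∑ Dd : Fin 2, ∑ D' : Fin 2,
        G A A' * G B B' * G Dd D' * T B' A B * T Dd A' D') := by
  have hT₀ := hT 0
  have hT₁ := hT 1
  simp only [Fin.sum_univ_two, hG 1 0] at hT₀ hT₁ ⊢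
  grind

namespace Sphere2

variable (D : Sphere2)

def trace (T : Fin 2 → Fin 2 → D.Pt → ℝ) : D.Pt → ℝ :=
  fun y => ∑ B : Fin 2, ∑ C : Fin 2, D.ginv B C y * T B C y

theorem trace_g (y : D.Pt) : D.trace D.g y = 2 := by
  have h₀ := D.g_ginv 0 0 y
  have h₁ := D.g_ginv 1 1 y
  simp only [trace, Fin.sum_univ_two, if_true, D.g_symm 1 0, D.ginv_symm 1 0] at h₀ h₁ ⊢
  linear_combination h₀ + h₁

theorem trace_Ften (c : D.Pt → ℝ) (y : D.Pt) : D.trace (D.Ften c) y = 0 := by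
  have h := D.trace_g y
  have hl : D.lap c y = D.trace (D.hess c) y := rfl
  simp only [trace, Ften, Fin.sum_univ_two] at h hl ⊢
  linear_combination (-(1 / 2) * D.lap c y) * h - hl

theorem trace_Fbar (c : D.Pt → ℝ) (y : D.Pt) : D.trace (D.Fbar c) y = 0 := by
  have e₀₀ : D.eps 0 0 y = 0 := by linarith [D.eps_antisymm 0 0 y]
  have e₁₁ : D.eps 1 1 y = 0 := by linarith [D.eps_antisymm 1 1 y]
  simp only [trace, Fbar, hess, Fin.sum_univ_two, e₀₀, e₁₁, D.eps_antisymm 1 0 y,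
    D.ginv_symm 1 0, D.hess_symm c 1 0 y]
  ring

theorem trace_Cten (c cb : D.Pt → ℝ) (y : D.Pt) : D.trace (D.Cten c cb) y = 0 := by
  have hF := D.trace_Ften c y
  have hFb := D.trace_Fbar cb y
  simp only [trace, Cten, Fin.sum_univ_two] at hF hFb ⊢
  linear_combination hF + hFb

theorem trace_d2_eq_zero {T : Fin 2 → Fin 2 → D.Pt → ℝ} (hT : ∀ y, D.trace T y = 0)
    (A : Fin 2) (x : D.Pt) : D.trace (D.d2 T A) x = 0 := by
  have h : D.d0 (D.trace T) A x = D.trace (D.d2 T A) x := D.ginv_contract_d0 T A x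
  rw [show D.trace T = fun _ => 0 from funext hT, D.d0_const] at h
  exact h.symm

end Sphere2

/-- For `C_{AB} = F_{AB} + F̲_{AB}` on the round unit sphere, the pointwise identity
`∇̊_A C_{BD} ∇̊^A C^{BD} = ∇̊_A C_{BD} ∇̊^B C^{AD} + ∇̊^B C_{AB} ∇̊_D C^{AD}` holds. -/
theorem stmt_6 (D : Sphere2) (c cb : D.Pt → ℝ) (x : D.Pt) :
    (∑ A : Fin 2, ∑ A' : Fin 2, ∑ B : Fin 2, ∑ B' : Fin 2, ∑ Dd : Fin 2, ∑ D' : Fin 2,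
        D.ginv A A' x * D.ginv B B' x * D.ginv Dd D' x
          * D.d2 (D.Cten c cb) A B Dd x * D.d2 (D.Cten c cb) A' B' D' x)
    = (∑ A : Fin 2, ∑ A' : Fin 2, ∑ B : Fin 2, ∑ B' : Fin 2, ∑ Dd : Fin 2, ∑ D' : Fin 2,
        D.ginv A A' x * D.ginv B B' x * D.ginv Dd D' x
          * D.d2 (D.Cten c cb) A B Dd x * D.d2 (D.Cten c cb) B' A' D' x)
      + (∑ A : Fin 2, ∑ A' : Fin 2, ∑ B : Fin 2, ∑ B' : Fin 2, ∑ Dd : Fin 2, ∑ D' : Fin 2,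
        D.ginv A A' x * D.ginv B B' x * D.ginv Dd D' x
          * D.d2 (D.Cten c cb) B' A B x * D.d2 (D.Cten c cb) Dd A' D' x) := by
  exact contract_sq_eq_contract_swap_add_div_sq (fun i j => D.ginv i j x)
    (fun i j k => D.d2 (D.Cten c cb) i j k x) (fun i j => congrFun (D.ginv_symm i j) x)
    (fun A => D.trace_d2_eq_zero (D.trace_Cten c cb) A x)
end
end

section
/- Let $Y^A$ be a Killing vector field on the round unit sphere (so $\mathring\nabla^A Y^B = -\mathring\nabla^B Y^A$, $\mathring\nabla_A Y^A = 0$, $\mathring\Delta Y^A = -Y^A$) and $u$ a smooth function on $S^2$. Then $\int_{S^2}(\mathring\Delta+2)u\;Y^A\mathring\nabla_A u\;d\mu = 0$. -/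
open scoped BigOperators

noncomputable section

/-!
For a Killing field `Y` consider the current
`W = (Y·∇u) ∇u + (u² - ½|∇u|²) Y`.
Since `∇Y` is antisymmetric, `Y` is divergence free and `∇u ⊗ ∇u : ∇Y = 0`, so the two
Hessian terms `∇²u(∇u, Y)` coming from `∇(Y·∇u)` and from `∇(½|∇u|²)` cancel and
`div W = (Δu + 2u) Y·∇u`. The divergence theorem finishes the proof.
(`W` is the Noether current of the Lagrangian `½|∇u|² - u²` for the isometries
generated by `Y`.)
-/

theorem sum_sum_symm_mul_antisymm_eq_zero {ι : Type*} [Fintype ι] {S T : ι → ι → ℝ}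
    (hS : ∀ i j, S i j = S j i) (hT : ∀ i j, T i j = -T j i) :
    ∑ i, ∑ j, S i j * T i j = 0 := by
  have h : ∑ i, ∑ j, S i j * T i j = -∑ i, ∑ j, S i j * T i j :=
    calc ∑ i, ∑ j, S i j * T i j = ∑ j, ∑ i, S i j * T i j := Finset.sum_comm
      _ = ∑ j, ∑ i, -(S j i * T j i) :=
        Finset.sum_congr rfl fun j _ => Finset.sum_congr rfl fun i _ => by
          rw [hS i j, hT i j, mul_neg]
      _ = -∑ j, ∑ i, S j i * T j i := by simp only [Finset.sum_neg_distrib]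
  linarith

namespace Sphere2

variable (D : Sphere2)

def dot (ω η : Fin 2 → D.Pt → ℝ) : D.Pt → ℝ :=
  fun x => ∑ A : Fin 2, ∑ B : Fin 2, D.ginv A B x * ω A x * η B x

/-- The Hessian form `∇̊²u(ω, η) = ω^A η^B ∇̊_A ∇̊_B u`. -/
def hessForm (u : D.Pt → ℝ) (ω η : Fin 2 → D.Pt → ℝ) : D.Pt → ℝ :=
  D.dot ω (fun A => D.dot (D.hess u A) η)

def killingCurrent (Y : Fin 2 → D.Pt → ℝ) (u : D.Pt → ℝ) : Fin 2 → D.Pt → ℝ :=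
  fun B x => D.dot (D.d0 u) Y x * D.d0 u B x
    + (u x * u x + -(1 / 2) * D.dot (D.d0 u) (D.d0 u) x) * Y B x

variable {D}

theorem dot_comm (ω η : Fin 2 → D.Pt → ℝ) : D.dot ω η = D.dot η ω := by
  funext x
  simp only [dot, Fin.sum_univ_two, D.ginv_symm 1 0]
  ring

theorem d0_dot (ω η : Fin 2 → D.Pt → ℝ) (A : Fin 2) (x : D.Pt) :
    D.d0 (D.dot ω η) A x = D.dot (D.d1 ω A) η x + D.dot ω (D.d1 η A) x := by
  have hcontr :
      D.dot ω η = fun y => ∑ B : Fin 2, ∑ C : Fin 2, D.ginv B C y * (ω B y * η C y) := by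
    funext y
    simp only [dot, mul_assoc]
  rw [hcontr, D.ginv_contract_d0, D.d2_tensor]
  simp only [dot, Fin.sum_univ_two]
  ring

theorem hessForm_comm (u : D.Pt → ℝ) (ω η : Fin 2 → D.Pt → ℝ) :
    D.hessForm u ω η = D.hessForm u η ω := by
  funext x
  simp only [hessForm, dot, hess, Fin.sum_univ_two, D.ginv_symm 1 0, D.hess_symm u 1 0 x]
  ring

theorem dot_dot_eq_zero_of_antisymm (ω : Fin 2 → D.Pt → ℝ) {T : Fin 2 → Fin 2 → D.Pt → ℝ}
    (hT : ∀ A B x, T A B x = -T B A x) (x : D.Pt) :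
    D.dot ω (fun A => D.dot ω (T A)) x = 0 := by
  set V : Fin 2 → ℝ := fun B => ∑ A : Fin 2, D.ginv A B x * ω A x
  have hsplit : D.dot ω (fun A => D.dot ω (T A)) x = ∑ A, ∑ B, V A * V B * T A B x := by
    simp only [V, dot, Fin.sum_univ_two]
    ring
  rw [hsplit]
  exact sum_sum_symm_mul_antisymm_eq_zero (fun A B => mul_comm _ _) (fun A B => hT A B x)

theorem dot_add_right (ω η θ : Fin 2 → D.Pt → ℝ) (x : D.Pt) :
    D.dot ω (fun A y => η A y + θ A y) x = D.dot ω η x + D.dot ω θ x := by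
  simp only [dot, mul_add, Finset.sum_add_distrib]

theorem divV_eq (V : Fin 2 → D.Pt → ℝ) (x : D.Pt) :
    D.divV V x = ∑ A : Fin 2, ∑ B : Fin 2, D.ginv A B x * D.d1 V A B x := by
  rw [divV, Finset.sum_comm]
  simp only [D.ginv_symm]

theorem integral_divV (V : Fin 2 → D.Pt → ℝ) : D.integral (D.divV V) = 0 := by
  rw [show D.divV V = _ from funext (divV_eq V)]
  exact D.divergence_thm V

theorem divV_add (V W : Fin 2 → D.Pt → ℝ) (x : D.Pt) :
    D.divV (fun B y => V B y + W B y) x = D.divV V x + D.divV W x := by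
  simp only [divV, D.d1_add, mul_add, Finset.sum_add_distrib]

theorem divV_fun_smul (f : D.Pt → ℝ) (V : Fin 2 → D.Pt → ℝ) (x : D.Pt) :
    D.divV (fun B y => f y * V B y) x = D.dot (D.d0 f) V x + f x * D.divV V x := by
  simp only [divV_eq, D.d1_fun_smul, dot, Fin.sum_univ_two]
  ring

theorem divV_d0 (u : D.Pt → ℝ) (x : D.Pt) : D.divV (D.d0 u) x = D.lap u x := by
  rw [divV_eq]
  rfl

theorem divV_eq_zero_of_antisymm {Y : Fin 2 → D.Pt → ℝ}
    (hY : ∀ A B x, D.d1 Y A B x = -D.d1 Y B A x) (x : D.Pt) : D.divV Y x = 0 := by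
  rw [divV_eq]
  exact sum_sum_symm_mul_antisymm_eq_zero (fun A B => congrFun (D.ginv_symm A B) x)
    (fun A B => hY A B x)

theorem d0_energy (u : D.Pt → ℝ) :
    D.d0 (fun y => u y * u y + -(1 / 2) * D.dot (D.d0 u) (D.d0 u) y)
      = fun A x => 2 * u x * D.d0 u A x - D.dot (D.hess u A) (D.d0 u) x := by
  funext A x
  simp only [D.d0_add, D.d0_mul u u, D.d0_mul (fun _ => -(1 / 2 : ℝ)), D.d0_const, d0_dot,
    dot_comm (D.d0 u) (D.d1 (D.d0 u) A), hess]
  ring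

theorem dot_d0_d0_dot_of_antisymm {Y : Fin 2 → D.Pt → ℝ}
    (hY : ∀ A B x, D.d1 Y A B x = -D.d1 Y B A x) (u : D.Pt → ℝ) (x : D.Pt) :
    D.dot (D.d0 (D.dot (D.d0 u) Y)) (D.d0 u) x = D.hessForm u (D.d0 u) Y x := by
  have hgrad : D.d0 (D.dot (D.d0 u) Y)
      = fun A y => D.dot (D.hess u A) Y y + D.dot (D.d0 u) (D.d1 Y A) y :=
    funext fun A => funext fun y => d0_dot _ _ A y
  rw [dot_comm, hgrad, dot_add_right, dot_dot_eq_zero_of_antisymm _ hY, add_zero]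
  rfl

theorem divV_killingCurrent {Y : Fin 2 → D.Pt → ℝ}
    (hY : ∀ A B x, D.d1 Y A B x = -D.d1 Y B A x) (u : D.Pt → ℝ) (x : D.Pt) :
    D.divV (D.killingCurrent Y u) x = (D.lap u x + 2 * u x) * D.dot (D.d0 u) Y x := by
  have henergy : D.dot (D.d0 fun y => u y * u y + -(1 / 2) * D.dot (D.d0 u) (D.d0 u) y) Y x
      = 2 * u x * D.dot (D.d0 u) Y x - D.hessForm u (D.d0 u) Y x := by
    rw [hessForm_comm, d0_energy]
    simp only [dot, hessForm, Fin.sum_univ_two, D.ginv_symm 1 0]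
    ring
  unfold killingCurrent
  rw [divV_add, divV_fun_smul, divV_fun_smul, dot_d0_d0_dot_of_antisymm hY,
    divV_d0, henergy, divV_eq_zero_of_antisymm hY]
  ring

end Sphere2

theorem stmt_15_general (D : Sphere2) (Y : Fin 2 → D.Pt → ℝ) (u : D.Pt → ℝ)
    (hKill : ∀ A B : Fin 2, ∀ x, D.d1 Y A B x = - D.d1 Y B A x) :
    D.integral (fun x => (D.lap u x + 2 * u x) *
      (∑ A : Fin 2, ∑ B : Fin 2, D.ginv A B x * Y B x * D.d0 u A x)) = 0 := by
  have hcurrent : (fun x => (D.lap u x + 2 * u x) *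
      (∑ A : Fin 2, ∑ B : Fin 2, D.ginv A B x * Y B x * D.d0 u A x))
      = D.divV (D.killingCurrent Y u) := by
    funext x
    simp only [Sphere2.divV_killingCurrent hKill, Sphere2.dot, mul_right_comm _ (Y _ x)]
  rw [hcurrent]
  exact Sphere2.integral_divV _

/-- For any Killing field `Y^A` on the round unit sphere (`∇̊^A Y^B = -∇̊^B Y^A`,
`∇̊_A Y^A = 0`, `Δ̊ Y^A = -Y^A`) and any smooth function `u`:
`∫_{S²} (Δ̊+2) u · Y^A ∇̊_A u dμ = 0`. -/
theorem stmt_15 (D : Sphere2) (Y : Fin 2 → D.Pt → ℝ) (u : D.Pt → ℝ)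
    (hKill : ∀ A B : Fin 2, ∀ x, D.d1 Y A B x = - D.d1 Y B A x)
    (hdiv : ∀ x, (∑ A : Fin 2, ∑ B : Fin 2, D.ginv A B x * D.d1 Y A B x) = 0)
    (hlap : ∀ A : Fin 2, ∀ x,
      (∑ E : Fin 2, ∑ E' : Fin 2, D.ginv E E' x * D.d2 (D.d1 Y) E E' A x) = - Y A x) :
    D.integral (fun x => (D.lap u x + 2 * u x) *
      (∑ A : Fin 2, ∑ B : Fin 2, D.ginv A B x * Y B x * D.d0 u A x)) = 0 :=
  stmt_15_general D Y u hKill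
end
end
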